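/- Let σ : Fin n → Fin n be a fixed-point-free involution (σ ∘ σ = id, σ i ≠ i) such that S i (σ i) is nonempty for every i. Then (1/2) · Σ_{i : Fin n} sInf { Q i a + Q (σ i) b : (a, b) ∈ S i (σ i) } is greater than or equal to the minimum of cost(f) over all feasible pairing schemes f; i.e., the minimum pairing-scheme sum power is no worse than the sum power of any matching. -/

import Mathlib

open MeasureTheory ProbabilityTheory

/-- Shannon entropy (in nats) of a random variable. -/
noncomputable def shEntropy {Ω : Type*} [MeasurableSpace Ω] {S : Type*}
    (μ : Measure Ω) (X : Ω → S) : ℝ :=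
  ∑' x : S, Real.negMulLog (μ (X ⁻¹' {x})).toReal

/-- Conditional Shannon entropy `H[X | Y]`. -/
noncomputable def shCondEntropy {Ω : Type*} [MeasurableSpace Ω] {S T : Type*}
    (μ : Measure Ω) (X : Ω → S) (Y : Ω → T) : ℝ :=
  ∑' y : T, (μ (Y ⁻¹' {y})).toReal * shEntropy (ProbabilityTheory.cond μ (Y ⁻¹' {y})) X

/-- The power needed at node `i` (channel gain `γ i`) to support rate `r` (in nats). -/
noncomputable def Qpow {n : ℕ} (γ : Fin n → ℝ) (i : Fin n) (r : ℝ) : ℝ :=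
  (Real.exp r - 1) / γ i

/-- The two-dimensional Slepian-Wolf region of the pair of sources `X i`, `X j`. -/
def SWregion {Ω S : Type*} [MeasurableSpace Ω] {n : ℕ}
    (μ : Measure Ω) (X : Fin n → Ω → S) (i j : Fin n) : Set (ℝ × ℝ) :=
  {q : ℝ × ℝ | q.1 ≥ shCondEntropy μ (X i) (X j) ∧ q.2 ≥ shCondEntropy μ (X j) (X i) ∧
    q.1 + q.2 ≥ shEntropy μ (fun ω => (X i ω, X j ω))}

/-- The Slepian-Wolf region intersected with the peak power constraints. -/
def Sregion {Ω S : Type*} [MeasurableSpace Ω] {n : ℕ}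
    (μ : Measure Ω) (X : Fin n → Ω → S) (γ : Fin n → ℝ) (Pmax : ℝ)
    (i j : Fin n) : Set (ℝ × ℝ) :=
  {q : ℝ × ℝ | q ∈ SWregion μ X i j ∧ Qpow γ i q.1 ≤ Pmax ∧ Qpow γ j q.2 ≤ Pmax}

/-- `X i` is initially decodable under `R` if `R i ≥ H[X i]`, or together with some
other source `X j` the rate pair `(R i, R j)` lies in their Slepian-Wolf region. -/
def InitiallyDecodable {Ω S : Type*} [MeasurableSpace Ω] {n : ℕ}
    (μ : Measure Ω) (X : Fin n → Ω → S) (R : Fin n → ℝ) (i : Fin n) : Prop :=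
  R i ≥ shEntropy μ (X i) ∨ ∃ j : Fin n, j ≠ i ∧ (R i, R j) ∈ SWregion μ X i j

/-- The generalized pairwise property: each source is initially decodable, or is
decodable via a chain of sources starting from an initially decodable one. -/
def GenPairwiseProperty {Ω S : Type*} [MeasurableSpace Ω] {n : ℕ}
    (μ : Measure Ω) (X : Fin n → Ω → S) (R : Fin n → ℝ) : Prop :=
  ∀ i : Fin n, InitiallyDecodable μ X R i ∨
    ∃ (k : ℕ) (s : ℕ → Fin n), 1 ≤ k ∧
      InitiallyDecodable μ X R (s 1) ∧
      (∀ j : ℕ, 2 ≤ j → j ≤ k → R (s j) ≥ shCondEntropy μ (X (s j)) (X (s (j - 1)))) ∧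
      R i ≥ shCondEntropy μ (X i) (X (s k))

/-- A rate assignment is generalized pairwise valid if it satisfies the generalized
pairwise property and every node meets the peak power constraint. -/
def GenPairwiseValid {Ω S : Type*} [MeasurableSpace Ω] {n : ℕ}
    (μ : Measure Ω) (X : Fin n → Ω → S) (γ : Fin n → ℝ) (Pmax : ℝ)
    (R : Fin n → ℝ) : Prop :=
  GenPairwiseProperty μ X R ∧ ∀ i : Fin n, Qpow γ i (R i) ≤ Pmax

/-- The decoding relation of a rate assignment: `a` can help decode `b` if
`H[X b | X a] ≤ R b`. -/
def decRel {Ω S : Type*} [MeasurableSpace Ω] {n : ℕ}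
    (μ : Measure Ω) (X : Fin n → Ω → S) (R : Fin n → ℝ) : Fin n → Fin n → Prop :=
  fun a b => shCondEntropy μ (X b) (X a) ≤ R b

/-- The mode of a node in a pairing scheme: a root (transmitting at full entropy),
a child of some node `j` (transmitting at conditional entropy given `X j`), or
matched with some node `j` (jointly decoded with `X j`). -/
inductive PairMode (n : ℕ) where
  | root : PairMode n
  | child (j : Fin n) : PairMode n
  | matched (j : Fin n) : PairMode n
deriving DecidableEq

/-- A pairing scheme: each node is a root, a child of another node, or matched with
another node; matching is symmetric, no two nodes are children of each other, and the
associated undirected graph is acyclic. -/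
structure PairingScheme (n : ℕ) where
  mode : Fin n → PairMode n
  child_ne : ∀ i j : Fin n, mode i = PairMode.child j → j ≠ i
  matched_ne : ∀ i j : Fin n, mode i = PairMode.matched j → j ≠ i
  matched_symm : ∀ i j : Fin n, mode i = PairMode.matched j ↔ mode j = PairMode.matched i
  no_mutual_child : ∀ i j : Fin n, i ≠ j →
    ¬(mode i = PairMode.child j ∧ mode j = PairMode.child i)
  acyclic : (SimpleGraph.fromRel fun i j =>
    mode i = PairMode.matched j ∨ mode i = PairMode.child j ∨
      mode j = PairMode.child i).IsAcyclic

/-- A pairing scheme is feasible if all the prescribed transmissions can be realized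
within the peak power constraint. -/
def PairingScheme.Feasible {Ω S : Type*} [MeasurableSpace Ω] {n : ℕ}
    (f : PairingScheme n) (μ : Measure Ω) (X : Fin n → Ω → S) (γ : Fin n → ℝ)
    (Pmax : ℝ) : Prop :=
  (∀ i : Fin n, f.mode i = PairMode.root → Qpow γ i (shEntropy μ (X i)) ≤ Pmax) ∧
  (∀ i j : Fin n, f.mode i = PairMode.child j →
    Qpow γ i (shCondEntropy μ (X i) (X j)) ≤ Pmax) ∧
  (∀ i j : Fin n, f.mode i = PairMode.matched j →
    (Sregion μ X γ Pmax i j).Nonempty)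

/-- The minimum sum power of a jointly decoded pair `(i, j)`. -/
noncomputable def pairPower {Ω S : Type*} [MeasurableSpace Ω] {n : ℕ}
    (μ : Measure Ω) (X : Fin n → Ω → S) (γ : Fin n → ℝ) (Pmax : ℝ)
    (i j : Fin n) : ℝ :=
  sInf {x : ℝ | ∃ a b : ℝ, (a, b) ∈ Sregion μ X γ Pmax i j ∧ x = Qpow γ i a + Qpow γ j b}

/-- The power contribution of node `i` in a pairing scheme; each member of a matched
pair contributes half of the pair power, so that the pair is counted once in total. -/
noncomputable def schemeContrib {Ω S : Type*} [MeasurableSpace Ω] {n : ℕ}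
    (μ : Measure Ω) (X : Fin n → Ω → S) (γ : Fin n → ℝ) (Pmax : ℝ)
    (f : PairingScheme n) (i : Fin n) : ℝ :=
  match f.mode i with
  | PairMode.root => Qpow γ i (shEntropy μ (X i))
  | PairMode.child j => Qpow γ i (shCondEntropy μ (X i) (X j))
  | PairMode.matched j => (1 / 2) * pairPower μ X γ Pmax i j

/-- The total cost (sum power) of a feasible pairing scheme: roots contribute the power
of their entropy, children the power of their conditional entropy, and each matched
pair (counted once) its minimum sum power. -/
noncomputable def schemeCost {Ω S : Type*} [MeasurableSpace Ω] {n : ℕ}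
    (μ : Measure Ω) (X : Fin n → Ω → S) (γ : Fin n → ℝ) (Pmax : ℝ)
    (f : PairingScheme n) : ℝ :=
  ∑ i : Fin n, schemeContrib μ X γ Pmax f i

/-! A fixed-point-free involution `σ` is itself a pairing scheme, matching every `i` with
`σ i`; its graph has maximum degree one and hence no cycles, and its cost is exactly the
matching power. There are only finitely many pairing schemes, so the minimum cost exists
and is at most that of this scheme. -/

instance PairMode.instFinite (n : ℕ) : Finite (PairMode n) :=
  Finite.of_injective
    (fun m : PairMode n => match m with
      | .root => (none : Option (Fin n ⊕ Fin n))
      | .child j => some (.inl j)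
      | .matched j => some (.inr j))
    (by rintro (_ | _ | _) (_ | _ | _) h <;> simp_all)

theorem PairingScheme.mode_injective (n : ℕ) :
    Function.Injective (PairingScheme.mode (n := n)) := by
  rintro ⟨⟩ ⟨⟩ rfl
  rfl

instance PairingScheme.instFinite (n : ℕ) : Finite (PairingScheme n) :=
  Finite.of_injective _ (PairingScheme.mode_injective n)

theorem SimpleGraph.isAcyclic_of_neighborSet_subsingleton {V : Type*} {G : SimpleGraph V}
    (h : ∀ v, (G.neighborSet v).Subsingleton) : G.IsAcyclic := by
  intro v c hc
  exact hc.snd_ne_penultimate <|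
    h v (c.adj_snd hc.not_nil) (c.adj_penultimate hc.not_nil).symm

namespace PairingScheme

variable {n : ℕ} (σ : Fin n → Fin n) (hσ : Function.Involutive σ) (hσ' : ∀ i, σ i ≠ i)

def ofInvolution : PairingScheme n where
  mode i := .matched (σ i)
  child_ne i j h := by cases h
  matched_ne i j h := by
    cases h
    exact hσ' i
  matched_symm i j := by
    simp only [PairMode.matched.injEq]
    exact ⟨fun h => h ▸ hσ i, fun h => h ▸ hσ j⟩
  no_mutual_child i j _ h := by cases h.1
  acyclic := by
    refine SimpleGraph.isAcyclic_of_neighborSet_subsingleton fun i => ?_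
    refine Set.subsingleton_of_subset_singleton (a := σ i) ?_
    rintro j ⟨-, h | h⟩ <;>
      simp only [PairMode.matched.injEq, reduceCtorEq, or_false] at h
    · exact h.symm
    · rw [Set.mem_singleton_iff, ← h, hσ]

@[simp]
theorem ofInvolution_mode (i : Fin n) :
    (ofInvolution σ hσ hσ').mode i = .matched (σ i) :=
  rfl

theorem feasible_ofInvolution {Ω S : Type*} [MeasurableSpace Ω] (μ : Measure Ω)
    (X : Fin n → Ω → S) (γ : Fin n → ℝ) (Pmax : ℝ)
    (hS : ∀ i, (Sregion μ X γ Pmax i (σ i)).Nonempty) :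
    (ofInvolution σ hσ hσ').Feasible μ X γ Pmax := by
  refine ⟨fun i h => ?_, fun i j h => ?_, fun i j h => ?_⟩ <;>
    simp only [ofInvolution_mode, reduceCtorEq, PairMode.matched.injEq] at h
  exact h ▸ hS i

theorem schemeCost_ofInvolution {Ω S : Type*} [MeasurableSpace Ω] (μ : Measure Ω)
    (X : Fin n → Ω → S) (γ : Fin n → ℝ) (Pmax : ℝ) :
    schemeCost μ X γ Pmax (ofInvolution σ hσ hσ') =
      (1 / 2) * ∑ i, pairPower μ X γ Pmax i (σ i) := by
  simp only [schemeCost, schemeContrib, ofInvolution_mode, Finset.mul_sum]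

end PairingScheme

theorem exists_isLeast_schemeCost_le {Ω S : Type*} [MeasurableSpace Ω] {n : ℕ}
    (μ : Measure Ω) (X : Fin n → Ω → S) (γ : Fin n → ℝ) (Pmax : ℝ)
    {f₀ : PairingScheme n} (hf₀ : f₀.Feasible μ X γ Pmax) :
    ∃ m : ℝ,
      IsLeast {c : ℝ | ∃ f : PairingScheme n, f.Feasible μ X γ Pmax ∧
        c = schemeCost μ X γ Pmax f} m ∧
      m ≤ schemeCost μ X γ Pmax f₀ := by
  obtain ⟨f, hf, hmin⟩ := Set.exists_min_image {f : PairingScheme n | f.Feasible μ X γ Pmax}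
    (schemeCost μ X γ Pmax) (Set.toFinite _) ⟨f₀, hf₀⟩
  refine ⟨_, ⟨⟨f, hf, rfl⟩, ?_⟩, hmin f₀ hf₀⟩
  rintro _ ⟨g, hg, rfl⟩
  exact hmin g hg

theorem minSchemeCost_le_matching_power_general
    {Ω S : Type*} [MeasurableSpace Ω]
    (μ : Measure Ω) {n : ℕ}
    (X : Fin n → Ω → S)
    (γ : Fin n → ℝ) (Pmax : ℝ)
    (σ : Fin n → Fin n) (hσ : σ ∘ σ = id) (hσ' : ∀ i, σ i ≠ i)
    (hS : ∀ i : Fin n, (Sregion μ X γ Pmax i (σ i)).Nonempty) :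
    ∃ m : ℝ,
      IsLeast {c : ℝ | ∃ f : PairingScheme n, f.Feasible μ X γ Pmax ∧
        c = schemeCost μ X γ Pmax f} m ∧
      m ≤ (1 / 2) * ∑ i : Fin n, pairPower μ X γ Pmax i (σ i) := by
  have hinv : Function.Involutive σ := congrFun hσ
  rw [← PairingScheme.schemeCost_ofInvolution σ hinv hσ']
  exact exists_isLeast_schemeCost_le μ X γ Pmax
    (PairingScheme.feasible_ofInvolution σ hinv hσ' μ X γ Pmax hS)

/-- The minimum pairing-scheme sum power is no worse than the sum power of any
matching given by a fixed-point-free involution. -/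
theorem minSchemeCost_le_matching_power
    {Ω S : Type*} [MeasurableSpace Ω] [MeasurableSpace S] [MeasurableSingletonClass S]
    (μ : Measure Ω) [IsProbabilityMeasure μ] {n : ℕ} (hn : 1 ≤ n)
    (X : Fin n → Ω → S) (hX : ∀ i, Measurable (X i))
    (hfin : ∀ i, (Set.range (X i)).Finite)
    (γ : Fin n → ℝ) (hγ : ∀ i, 0 < γ i) (Pmax : ℝ) (hP : 0 < Pmax)
    (hneven : Even n)
    (σ : Fin n → Fin n) (hσ : σ ∘ σ = id) (hσ' : ∀ i, σ i ≠ i)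
    (hS : ∀ i : Fin n, (Sregion μ X γ Pmax i (σ i)).Nonempty) :
    ∃ m : ℝ,
      IsLeast {c : ℝ | ∃ f : PairingScheme n, f.Feasible μ X γ Pmax ∧
        c = schemeCost μ X γ Pmax f} m ∧
      m ≤ (1 / 2) * ∑ i : Fin n, pairPower μ X γ Pmax i (σ i) :=
  minSchemeCost_le_matching_power_general μ X γ Pmax σ hσ hσ' hS
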